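/- Let G be a group, g ∈ G, and k ≥ 1. Define A_0 = G, A_1 = ⟨g⟩^G, A_{n+1} = ⟨g⟩^{A_n}, and D_1 = [G,⟨g⟩], D_{n+1} = [D_n,⟨g⟩]. Suppose λ = (g^{n_1})^{h_1} · ... · (g^{n_r})^{h_r} where each n_i ∈ ℤ and each h_i ∈ A_{k-1}, and let l = n_1 + ... + n_r. Then g^{-l}·λ ∈ D_k. -/

import Mathlib

/-!
Write `H = ⟨g⟩`. A conjugate `k⁻¹ h k` equals `h ⁅h⁻¹, k⁻¹⁆`, so `A (n + 1) ≤ H ⊔ ⁅A n, H⁆`.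
Since `H` is abelian and normalizes each `D n`, a commutator `⁅h m, h'⁆` with `h, h' ∈ H`,
`m ∈ D n` equals `⁅h m h⁻¹, h'⁆ ∈ ⁅D n, H⁆`; hence by induction `⁅A n, H⁆ ≤ D (n + 1)`.
Each factor then satisfies `g^{-nᵢ} (g^{nᵢ})^{hᵢ} = ⁅g^{-nᵢ}, hᵢ⁻¹⁆ ∈ D k`, and as `g`
normalizes `D k` the powers of `g` can be collected in front of the product.
-/

/-- Normal closure of `H` in `K` as a subgroup of `G`. -/
def nclIn {G : Type*} [Group G] (H K : Subgroup G) : Subgroup G :=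
  Subgroup.closure {x | ∃ h ∈ H, ∃ k ∈ K, x = k⁻¹ * h * k}

open scoped commutatorElement Pointwise

namespace Subgroup

variable {G : Type*} [Group G]

theorem nclIn_le_sup_commutator (H K : Subgroup G) : nclIn H K ≤ H ⊔ ⁅K, H⁆ := by
  refine (closure_le _).mpr ?_
  rintro _ ⟨h, hh, k, hk, rfl⟩
  have hconj : k⁻¹ * h * k = h * ⁅h⁻¹, k⁻¹⁆ := by
    simp only [commutatorElement_def]; group
  rw [SetLike.mem_coe, hconj, commutator_comm K H]
  exact mul_mem_sup hh (commutator_mem_commutator (inv_mem hh) (inv_mem hk))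

theorem commutator_sup_le_of_le_normalizer {H N : Subgroup G} [IsMulCommutative H]
    (hN : H ≤ normalizer N) : ⁅H ⊔ N, H⁆ ≤ ⁅N, H⁆ := by
  rw [commutator_le]
  intro x hx h' hh'
  obtain ⟨h, hh, m, hm, rfl⟩ : x ∈ (H : Set G) * (N : Set G) :=
    coe_mul_of_left_le_normalizer_right H N hN ▸ SetLike.mem_coe.mpr hx
  have hcomm : Commute h h' := setLike_mul_comm hh hh'
  have hconj : ⁅h * m, h'⁆ = ⁅h * m * h⁻¹, h'⁆ :=
    calc ⁅h * m, h'⁆ = h * m * (h⁻¹ * h' * h) * m⁻¹ * h⁻¹ * h'⁻¹ := by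
          rw [hcomm.inv_mul_cancel]; simp only [commutatorElement_def]; group
      _ = ⁅h * m * h⁻¹, h'⁆ := by simp only [commutatorElement_def]; group
  rw [hconj]
  exact commutator_mem_commutator ((mem_normalizer_iff.mp (hN hh) m).mp hm) hh'

theorem zpow_neg_sum_mul_prod_mem {N : Subgroup G} {g : G} (hg : g ∈ normalizer N)
    (n : ℕ → ℤ) (x : ℕ → G) :
    ∀ r, (∀ i < r, g ^ (-n i) * x i ∈ N) →
      g ^ (-∑ i ∈ Finset.range r, n i) * ((List.range r).map x).prod ∈ N
  | 0, _ => by simp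
  | r + 1, hx => by
    have hprefix := zpow_neg_sum_mul_prod_mem hg n x r fun i hi => hx i (by omega)
    have hconj := (mem_normalizer_iff.mp (zpow_mem hg (-n r)) _).mp hprefix
    rw [List.range_succ, List.map_append, List.prod_append, Finset.sum_range_succ]
    convert mul_mem hconj (hx r (by omega)) using 1
    simp only [List.map_cons, List.map_nil, List.prod_cons, List.prod_nil, mul_one]
    group

end Subgroup

section LowerCentralAlong

open Subgroup

variable {G : Type*} [Group G] {H : Subgroup G} {A D : ℕ → Subgroup G}

theorem le_normalizer_of_commutator_eq (hD1 : D 1 = ⁅(⊤ : Subgroup G), H⁆)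
    (hD : ∀ n ≥ 1, D (n + 1) = ⁅D n, H⁆) (n : ℕ) : H ≤ normalizer (D (n + 1)) := by
  rcases n with _ | n
  · exact hD1 ▸ normalizer_commutator_ge_right _ _
  · exact hD (n + 1) (by omega) ▸ normalizer_commutator_ge_right _ _

theorem eq_nclIn_of_eq_nclIn_top (hA0 : A 0 = ⊤) (hA1 : A 1 = nclIn H ⊤)
    (hA : ∀ n ≥ 1, A (n + 1) = nclIn H (A n)) (n : ℕ) : A (n + 1) = nclIn H (A n) := by
  rcases n with _ | n
  · rw [hA1, hA0]
  · exact hA (n + 1) (by omega)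

theorem commutator_le_of_eq_nclIn [IsMulCommutative H] (hA0 : A 0 = ⊤)
    (hA : ∀ n, A (n + 1) = nclIn H (A n)) (hD1 : D 1 = ⁅(⊤ : Subgroup G), H⁆)
    (hD : ∀ n ≥ 1, D (n + 1) = ⁅D n, H⁆) : ∀ n, ⁅A n, H⁆ ≤ D (n + 1)
  | 0 => by rw [hA0, hD1]
  | n + 1 =>
    calc ⁅A (n + 1), H⁆ ≤ ⁅H ⊔ D (n + 1), H⁆ := by
          refine commutator_mono ?_ le_rfl
          rw [hA n]
          exact (nclIn_le_sup_commutator H (A n)).trans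
            (sup_le_sup_left (commutator_le_of_eq_nclIn hA0 hA hD1 hD n) H)
      _ ≤ ⁅D (n + 1), H⁆ :=
          commutator_sup_le_of_le_normalizer (le_normalizer_of_commutator_eq hD1 hD n)
      _ = D (n + 2) := (hD (n + 1) (by omega)).symm

end LowerCentralAlong

/-- Proposition 3.1(b), group-theoretic content: if `λ` is a product of conjugates
`(g^{n_i})^{h_i}` with `h_i ∈ A (k-1)`, and `l = ∑ n_i`, then `g^{-l} * λ ∈ D k`. -/
theorem stmt7 {G : Type*} [Group G] (g : G) (k : ℕ) (hk : k ≥ 1)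
    (A D : ℕ → Subgroup G)
    (hA0 : A 0 = ⊤)
    (hA1 : A 1 = nclIn (Subgroup.zpowers g) ⊤)
    (hA : ∀ n ≥ 1, A (n + 1) = nclIn (Subgroup.zpowers g) (A n))
    (hD1 : D 1 = ⁅(⊤ : Subgroup G), Subgroup.zpowers g⁆)
    (hD : ∀ n ≥ 1, D (n + 1) = ⁅D n, Subgroup.zpowers g⁆)
    (r : ℕ) (n : ℕ → ℤ) (h : ℕ → G) (hh : ∀ i < r, h i ∈ A (k - 1))
    (lam : G) (hlam : lam = ((List.range r).map (fun i => (h i)⁻¹ * g ^ (n i) * h i)).prod) :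
    g ^ (-(∑ i ∈ Finset.range r, n i)) * lam ∈ D k := by
  subst hlam
  obtain ⟨k, rfl⟩ : ∃ j, k = j + 1 := ⟨k - 1, by omega⟩
  have hA_le := commutator_le_of_eq_nclIn hA0 (eq_nclIn_of_eq_nclIn_top hA0 hA1 hA) hD1 hD k
  refine Subgroup.zpow_neg_sum_mul_prod_mem
    (le_normalizer_of_commutator_eq hD1 hD k (Subgroup.mem_zpowers g)) n _ r fun i hi => ?_
  have hfactor : g ^ (-n i) * ((h i)⁻¹ * g ^ n i * h i) = ⁅g ^ (-n i), (h i)⁻¹⁆ := by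
    simp only [commutatorElement_def]; group
  rw [hfactor]
  refine hA_le (Subgroup.commutator_comm (Subgroup.zpowers g) (A k) ▸ ?_)
  exact Subgroup.commutator_mem_commutator (zpow_mem (Subgroup.mem_zpowers g) _)
    (inv_mem (by simpa using hh i hi))
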